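/- Let B be a graph admitting a path-decomposition of width p, and suppose B has a proper 2-coloring with color classes C_1 and C_2 where |C_1| ≥ |C_2|. Then for every non-negative integer a with |C_2| − p ≤ a ≤ |C_1|, there exists a set X of at most p vertices of B and a proper 2-coloring of B \ X with color classes C'_1, C'_2 such that |C'_1| = a. -/

import Mathlib

/-- `G` has pathwidth at most `p`: it admits a path-decomposition (a sequence of
bags covering all vertices and edges, whose occurrences of each vertex are
contiguous) all of whose bags have at most `p + 1` vertices. -/
def HasPathwidthLE {V : Type*} (G : SimpleGraph V) (p : ℕ) : Prop :=
  ∃ (r : ℕ) (B : Fin r → Finset V),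
    (∀ v, ∃ i, v ∈ B i) ∧
    (∀ u v, G.Adj u v → ∃ i, u ∈ B i ∧ v ∈ B i) ∧
    (∀ v, ∀ i j l : Fin r, i ≤ j → j ≤ l → v ∈ B i → v ∈ B l → v ∈ B j) ∧
    (∀ i, (B i).card ≤ p + 1)

/-!
A path-decomposition gives every vertex an interval of bags; breaking ties, let the vertices be
born and die at integer times, all deaths distinct. At time `t` no dead vertex is adjacent to an
unborn one, so swapping the two colours on the unborn vertices gives a proper 2-colouring of all
vertices except those alive at `t`. The size `|C₁ ∩ dead| + |C₂ ∩ unborn|` of the new first class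
runs from `|C₂|` to `|C₁|` and grows by at most one per step, so it first reaches any `a` in
between at the death of some vertex `w`; the vertices then alive lie in the last bag of `w`, minus
`w`, so there are at most `p` of them. Values `a < |C₂|` are reached by deleting `|C₂| - a ≤ p`
vertices of `C₂`.
-/

open Finset

theorem Nat.exists_lt_and_succ_eq_of_succ_le {g : ℕ → ℕ} {a T : ℕ} (h0 : g 0 < a)
    (hT : a ≤ g T) (hstep : ∀ t, g (t + 1) ≤ g t + 1) : ∃ t, g t < a ∧ g (t + 1) = a := by
  classical
  have hex : ∃ t, a ≤ g t := ⟨T, hT⟩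
  obtain ⟨t, ht⟩ : ∃ t, Nat.find hex = t + 1 :=
    Nat.exists_eq_add_one.mpr (Nat.pos_of_ne_zero fun h => by
      have := Nat.find_spec hex; rw [h] at this; omega)
  have hlt : g t < a := not_le.mp (Nat.find_min hex (by omega))
  have hge : a ≤ g (t + 1) := ht ▸ Nat.find_spec hex
  exact ⟨t, hlt, le_antisymm (by linarith [hstep t]) hge⟩

theorem Nat.le_of_mul_lt_mul_add_self {n a b : ℕ} (h : n * a < n * b + n) : a ≤ b :=
  have h' : n * a < n * (b + 1) := by rwa [mul_add, mul_one]
  Nat.lt_succ_iff.mp (Nat.lt_of_mul_lt_mul_left h')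

namespace SimpleGraph

variable {V : Type}

section TwoColoring

variable [DecidableEq V] (G : SimpleGraph V)

def IsTwoColoringOn (U C₁ C₂ : Finset V) : Prop :=
  Disjoint C₁ C₂ ∧ C₁ ∪ C₂ = U ∧
    (∀ u ∈ C₁, ∀ v ∈ C₁, ¬ G.Adj u v) ∧ (∀ u ∈ C₂, ∀ v ∈ C₂, ¬ G.Adj u v)

namespace IsTwoColoringOn

variable {G} {U C₁ C₂ : Finset V}

theorem symm (h : G.IsTwoColoringOn U C₁ C₂) : G.IsTwoColoringOn U C₂ C₁ :=
  ⟨h.1.symm, union_comm C₂ C₁ ▸ h.2.1, h.2.2.2, h.2.2.1⟩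

theorem sdiff_left {X : Finset V} (h : G.IsTwoColoringOn U C₁ C₂) (hX : X ⊆ C₁) :
    G.IsTwoColoringOn (U \ X) (C₁ \ X) C₂ := by
  obtain ⟨hdisj, rfl, h₁, h₂⟩ := h
  refine ⟨disjoint_of_subset_left sdiff_subset hdisj, ?_, fun u hu v hv =>
    h₁ u (mem_sdiff.mp hu).1 v (mem_sdiff.mp hv).1, h₂⟩
  rw [union_sdiff_distrib, sdiff_eq_self_of_disjoint (disjoint_of_subset_right hX hdisj.symm)]

theorem exists_recoloring_of_le_card {p a : ℕ} (h : G.IsTwoColoringOn U C₁ C₂)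
    (ha : #C₂ - p ≤ a) (ha' : a ≤ #C₂) :
    ∃ X C₁' C₂', #X ≤ p ∧ G.IsTwoColoringOn (U \ X) C₁' C₂' ∧ #C₁' = a := by
  obtain ⟨X, hX, hcard⟩ := exists_subset_card_eq (show #C₂ - a ≤ #C₂ by omega)
  refine ⟨X, C₂ \ X, C₁, by omega, h.symm.sdiff_left hX, ?_⟩
  rw [card_sdiff_of_subset hX]
  omega

theorem swap_right {L R : Finset V} (h : G.IsTwoColoringOn U C₁ C₂) (hLR : Disjoint L R)
    (hsub : L ∪ R ⊆ U) (hsep : ∀ u ∈ L, ∀ w ∈ R, ¬ G.Adj u w) :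
    G.IsTwoColoringOn (L ∪ R) (C₁ ∩ L ∪ C₂ ∩ R) (C₂ ∩ L ∪ C₁ ∩ R) := by
  obtain ⟨hdisj, rfl, h₁, h₂⟩ := h
  have hsep' : ∀ u ∈ R, ∀ w ∈ L, ¬ G.Adj u w := fun u hu w hw hadj =>
    hsep w hw u hu hadj.symm
  refine ⟨?_, ?_, ?_, ?_⟩
  · rw [Finset.disjoint_left]
    intro v
    have hv₁ : v ∈ C₁ → v ∉ C₂ := fun hv => Finset.disjoint_left.mp hdisj hv
    have hvL : v ∈ L → v ∉ R := fun hv => Finset.disjoint_left.mp hLR hv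
    simp only [mem_union, mem_inter]
    tauto
  · ext v
    have := @hsub v
    simp only [mem_union, mem_inter] at this ⊢
    tauto
  · simp only [mem_union, mem_inter]
    rintro u (⟨hu, huL⟩ | ⟨hu, huR⟩) v (⟨hv, hvL⟩ | ⟨hv, hvR⟩)
    exacts [h₁ u hu v hv, hsep u huL v hvR, hsep' u huR v hvL, h₂ u hu v hv]
  · simp only [mem_union, mem_inter]
    rintro u (⟨hu, huL⟩ | ⟨hu, huR⟩) v (⟨hv, hvL⟩ | ⟨hv, hvR⟩)
    exacts [h₂ u hu v hv, hsep u huL v hvR, hsep' u huR v hvL, h₁ u hu v hv]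

end IsTwoColoringOn

end TwoColoring

variable [Fintype V]

/-- Vertex `v` is alive between the times `birth v` and `death v`. At time `t` the vertices with
`death ≤ t` are dead, those with `t ≤ birth` are unborn, and those with `birth < t < death`
separate the two. -/
structure IntervalModel (G : SimpleGraph V) (p : ℕ) where
  birth : V → ℕ
  death : V → ℕ
  birth_lt_death : ∀ v, birth v < death v
  birth_lt_death_of_adj : ∀ u w, G.Adj u w → birth u < death w
  death_injective : Function.Injective death
  card_alive_le : ∀ w, #{v | birth v < death w ∧ death w < death v} ≤ p

namespace IntervalModel

variable {G : SimpleGraph V} {p : ℕ} (M : G.IntervalModel p)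

def dead (t : ℕ) : Finset V := {v | M.death v ≤ t}

def unborn (t : ℕ) : Finset V := {v | t ≤ M.birth v}

theorem disjoint_dead_unborn (t : ℕ) : Disjoint (M.dead t) (M.unborn t) := by
  simp only [dead, unborn, disjoint_filter]
  intro v _ hv
  have := M.birth_lt_death v
  omega

theorem not_adj_of_mem_dead_of_mem_unborn {t : ℕ} :
    ∀ u ∈ M.dead t, ∀ w ∈ M.unborn t, ¬ G.Adj u w := by
  simp only [dead, unborn, mem_filter, mem_univ, true_and]
  intro u hu w hw hadj
  have := M.birth_lt_death_of_adj w u hadj.symm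
  omega

theorem card_alive_at_death_le [DecidableEq V] (w : V) :
    #(univ \ (M.dead (M.death w) ∪ M.unborn (M.death w))) ≤ p := by
  convert M.card_alive_le w using 2
  ext v
  simp only [dead, unborn, mem_sdiff, mem_union, mem_filter, mem_univ, true_and]
  omega

theorem dead_zero : M.dead 0 = ∅ := by
  ext v
  simp only [dead, mem_filter, mem_univ, true_and, notMem_empty, iff_false, not_le]
  exact (Nat.zero_le _).trans_lt (M.birth_lt_death v)

theorem unborn_zero : M.unborn 0 = univ := by
  ext v
  simp [unborn]

theorem dead_sup_death : M.dead (univ.sup M.death) = univ := by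
  ext v
  simpa [dead] using le_sup (f := M.death) (mem_univ v)

theorem unborn_sup_death : M.unborn (univ.sup M.death) = ∅ := by
  ext v
  simp only [unborn, mem_filter, mem_univ, true_and, notMem_empty, iff_false, not_le]
  exact (M.birth_lt_death v).trans_le (le_sup (mem_univ v))

theorem card_inter_unborn_succ_le [DecidableEq V] (C : Finset V) (t : ℕ) :
    #(C ∩ M.unborn (t + 1)) ≤ #(C ∩ M.unborn t) :=
  card_le_card <| inter_subset_inter_left <| monotone_filter_right _ fun _ h => by omega

theorem dead_succ [DecidableEq V] (t : ℕ) :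
    M.dead (t + 1) = M.dead t ∪ ({v | M.death v = t + 1} : Finset V) := by
  ext v
  simp only [dead, mem_union, mem_filter, mem_univ, true_and]
  omega

theorem card_inter_dead_succ_le [DecidableEq V] (C : Finset V) (t : ℕ) :
    #(C ∩ M.dead (t + 1)) ≤ #(C ∩ M.dead t) + 1 := by
  have hdeath : #({v | M.death v = t + 1} : Finset V) ≤ 1 :=
    card_le_one.mpr fun u hu w hw => M.death_injective <| by
      rw [(mem_filter.mp hu).2, (mem_filter.mp hw).2]
  calc #(C ∩ M.dead (t + 1))
      ≤ #(C ∩ M.dead t) + #(C ∩ ({v | M.death v = t + 1} : Finset V)) := by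
        rw [dead_succ, inter_union_distrib_left]
        exact card_union_le _ _
    _ ≤ #(C ∩ M.dead t) + 1 := by grw [(card_le_card inter_subset_right).trans hdeath]

theorem exists_death_eq_of_dead_succ_ne [DecidableEq V] {t : ℕ} (h : M.dead (t + 1) ≠ M.dead t) :
    ∃ w, M.death w = t + 1 := by
  by_contra! hne
  refine h ((M.dead_succ t).trans ?_)
  rw [union_eq_left]
  intro v hv
  exact absurd (mem_filter.mp hv).2 (hne v)

theorem exists_recoloring [DecidableEq V] (M : G.IntervalModel p) {C₁ C₂ : Finset V} {a : ℕ}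
    (hC : G.IsTwoColoringOn univ C₁ C₂) (ha : #C₂ < a) (ha' : a ≤ #C₁) :
    ∃ X C₁' C₂', #X ≤ p ∧ G.IsTwoColoringOn (univ \ X) C₁' C₂' ∧ #C₁' = a := by
  set g : ℕ → ℕ := fun t => #(C₁ ∩ M.dead t) + #(C₂ ∩ M.unborn t) with hg
  have hg0 : g 0 = #C₂ := by simp [hg, dead_zero, unborn_zero]
  have hgT : g (univ.sup M.death) = #C₁ := by simp [hg, dead_sup_death, unborn_sup_death]
  have hstep : ∀ t, g (t + 1) ≤ g t + 1 := fun t => by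
    have := M.card_inter_unborn_succ_le C₂ t
    have := M.card_inter_dead_succ_le C₁ t
    simp only [hg]
    omega
  obtain ⟨t, hlt, heq⟩ :=
    Nat.exists_lt_and_succ_eq_of_succ_le (hg0 ▸ ha) (hgT ▸ ha') hstep
  obtain ⟨w, hw⟩ : ∃ w, M.death w = t + 1 := M.exists_death_eq_of_dead_succ_ne fun h => by
    have := M.card_inter_unborn_succ_le C₂ t
    simp only [hg, h] at hlt heq
    omega
  have hX := M.card_alive_at_death_le w
  rw [hw] at hX
  set L := M.dead (t + 1)
  set R := M.unborn (t + 1)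
  refine ⟨univ \ (L ∪ R), C₁ ∩ L ∪ C₂ ∩ R, C₂ ∩ L ∪ C₁ ∩ R, hX, ?_, ?_⟩
  · rw [Finset.sdiff_sdiff_eq_self (subset_univ _)]
    exact hC.swap_right (M.disjoint_dead_unborn _) (subset_univ _)
      M.not_adj_of_mem_dead_of_mem_unborn
  · rw [card_union_of_disjoint ((M.disjoint_dead_unborn _).mono inter_subset_right
      inter_subset_right)]
    exact heq

/-- Refines the closed intervals `[lo v, hi v]` to integer times with pairwise distinct deaths:
with `n = card V`, time `t` is blown up to the block `[n t, n t + n]` and the vertex with index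
`k` dies at offset `k + 1`. -/
noncomputable def ofIntervals (lo hi : V → ℕ) (hlohi : ∀ v, lo v ≤ hi v)
    (hadj : ∀ u w, G.Adj u w → lo u ≤ hi w)
    (hwidth : ∀ t, #{v | lo v ≤ t ∧ t ≤ hi v} ≤ p + 1) : G.IntervalModel p where
  birth v := Fintype.card V * lo v
  death v := Fintype.card V * hi v + Fintype.equivFin V v + 1
  birth_lt_death v := by
    have := Nat.mul_le_mul_left (Fintype.card V) (hlohi v)
    omega
  birth_lt_death_of_adj u w huw := by
    have := Nat.mul_le_mul_left (Fintype.card V) (hadj u w huw)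
    omega
  death_injective u w huw := by
    dsimp only at huw
    have hu := (Fintype.equivFin V u).isLt
    have hw := (Fintype.equivFin V w).isLt
    have h₁ : hi u ≤ hi w := Nat.le_of_mul_lt_mul_add_self (n := Fintype.card V) (by omega)
    have h₂ : hi w ≤ hi u := Nat.le_of_mul_lt_mul_add_self (n := Fintype.card V) (by omega)
    have : hi u = hi w := le_antisymm h₁ h₂
    exact (Fintype.equivFin V).injective (Fin.ext (by simp_all))
  card_alive_le w := by
    classical
    set A : Finset V := {v | lo v ≤ hi w ∧ hi w ≤ hi v}
    have hwA : w ∈ A := mem_filter.mpr ⟨mem_univ w, hlohi w, le_rfl⟩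
    refine (card_le_card (t := A.erase w) fun v hv => ?_).trans ?_
    · simp only [mem_filter, mem_univ, true_and] at hv
      have hv' := (Fintype.equivFin V v).isLt
      have hw' := (Fintype.equivFin V w).isLt
      refine mem_erase.mpr ⟨by rintro rfl; omega, mem_filter.mpr ⟨mem_univ v, ?_, ?_⟩⟩
      · exact Nat.le_of_mul_lt_mul_add_self (n := Fintype.card V) (by omega)
      · exact Nat.le_of_mul_lt_mul_add_self (n := Fintype.card V) (by omega)
    · have : #A ≤ p + 1 := hwidth (hi w)
      rw [card_erase_of_mem hwA]
      omega

end IntervalModel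

end SimpleGraph

theorem HasPathwidthLE.exists_intervals {V : Type} [Fintype V] {G : SimpleGraph V} {p : ℕ}
    (h : HasPathwidthLE G p) :
    ∃ lo hi : V → ℕ, (∀ v, lo v ≤ hi v) ∧ (∀ u w, G.Adj u w → lo u ≤ hi w) ∧
      ∀ t, #{v | lo v ≤ t ∧ t ≤ hi v} ≤ p + 1 := by
  classical
  obtain ⟨r, B, hcover, hedge, hcontig, hcard⟩ := h
  have hbags : ∀ v, ∃ i j : Fin r, v ∈ B i ∧ v ∈ B j ∧ ∀ k, v ∈ B k → i ≤ k ∧ k ≤ j := by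
    intro v
    set S : Finset (Fin r) := {k | v ∈ B k}
    have hne : S.Nonempty := let ⟨i, hi⟩ := hcover v; ⟨i, by simpa [S] using hi⟩
    exact ⟨S.min' hne, S.max' hne, (mem_filter.mp (S.min'_mem hne)).2,
      (mem_filter.mp (S.max'_mem hne)).2,
      fun k hk => ⟨S.min'_le k (by simpa [S] using hk), S.le_max' k (by simpa [S] using hk)⟩⟩
  choose lo hi hlo hhi hbounds using hbags
  refine ⟨fun v => lo v, fun v => hi v, fun v => (hbounds v _ (hlo v)).2, ?_, ?_⟩
  · intro u w huw
    obtain ⟨i, hu, hw⟩ := hedge u w huw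
    exact Fin.le_iff_val_le_val.mp ((hbounds u i hu).1.trans (hbounds w i hw).2)
  · intro t
    by_cases ht : t < r
    · refine (card_le_card fun v hv => ?_).trans (hcard ⟨t, ht⟩)
      simp only [mem_filter, mem_univ, true_and] at hv
      exact hcontig v (lo v) ⟨t, ht⟩ (hi v) hv.1 hv.2 (hlo v) (hhi v)
    · rw [card_eq_zero.mpr (filter_eq_empty_iff.mpr fun v _ hv => ht (hv.2.trans_lt (hi v).isLt))]
      exact Nat.zero_le _

theorem HasPathwidthLE.nonempty_intervalModel {V : Type} [Fintype V]
    {G : SimpleGraph V} {p : ℕ} (h : HasPathwidthLE G p) : Nonempty (G.IntervalModel p) :=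
  let ⟨lo, hi, hlohi, hadj, hwidth⟩ := h.exists_intervals
  ⟨.ofIntervals lo hi hlohi hadj hwidth⟩

theorem stmt10_general {V : Type} [Fintype V] [DecidableEq V] (B : SimpleGraph V) (p : ℕ)
    (hpw : HasPathwidthLE B p)
    (C1 C2 : Finset V)
    (hdisj : Disjoint C1 C2) (hunion : C1 ∪ C2 = Finset.univ)
    (h1 : ∀ u ∈ C1, ∀ v ∈ C1, ¬ B.Adj u v)
    (h2 : ∀ u ∈ C2, ∀ v ∈ C2, ¬ B.Adj u v)
    (a : ℕ) (ha1 : C2.card - p ≤ a) (ha2 : a ≤ C1.card) :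
    ∃ X C1' C2' : Finset V, X.card ≤ p ∧ Disjoint C1' C2' ∧
      C1' ∪ C2' = Finset.univ \ X ∧
      (∀ u ∈ C1', ∀ v ∈ C1', ¬ B.Adj u v) ∧
      (∀ u ∈ C2', ∀ v ∈ C2', ¬ B.Adj u v) ∧
      C1'.card = a := by
  have hC : B.IsTwoColoringOn univ C1 C2 := ⟨hdisj, hunion, h1, h2⟩
  suffices ∃ X C1' C2', #X ≤ p ∧ B.IsTwoColoringOn (univ \ X) C1' C2' ∧ #C1' = a by
    obtain ⟨X, C1', C2', hX, ⟨hdisj', hunion', h1', h2'⟩, ha⟩ := this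
    exact ⟨X, C1', C2', hX, hdisj', hunion', h1', h2', ha⟩
  rcases le_or_gt a #C2 with ha | ha
  · exact hC.exists_recoloring_of_le_card ha1 ha
  · obtain ⟨M⟩ := hpw.nonempty_intervalModel
    exact M.exists_recoloring hC ha ha2

theorem stmt10 {V : Type} [Fintype V] [DecidableEq V] (B : SimpleGraph V) (p : ℕ)
    (hpw : HasPathwidthLE B p)
    (C1 C2 : Finset V)
    (hdisj : Disjoint C1 C2) (hunion : C1 ∪ C2 = Finset.univ)
    (h1 : ∀ u ∈ C1, ∀ v ∈ C1, ¬ B.Adj u v)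
    (h2 : ∀ u ∈ C2, ∀ v ∈ C2, ¬ B.Adj u v)
    (hle : C2.card ≤ C1.card)
    (a : ℕ) (ha1 : C2.card - p ≤ a) (ha2 : a ≤ C1.card) :
    ∃ X C1' C2' : Finset V, X.card ≤ p ∧ Disjoint C1' C2' ∧
      C1' ∪ C2' = Finset.univ \ X ∧
      (∀ u ∈ C1', ∀ v ∈ C1', ¬ B.Adj u v) ∧
      (∀ u ∈ C2', ∀ v ∈ C2', ¬ B.Adj u v) ∧
      C1'.card = a :=
  stmt10_general B p hpw C1 C2 hdisj hunion h1 h2 a ha1 ha2
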